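/- Every well-rounded lattice of rank 2 in R^2 is stable: if L ⊂ R^2 has two linearly independent vectors of minimal nonzero length, then for every nonzero sublattice L' ⊆ L of rank k, det(L)^{1/2} ≤ det(L')^{1/k}. -/

import Mathlib

/-!
The Gram determinant of `x, y ∈ ℝ²` is the square of the determinant `[x y]`, so
`det L = |[v₁ v₂]|`. The determinant of two vectors of `L` is an integer multiple of `[v₁ v₂]`,
which gives `det L ≤ det L'` for sublattices of rank two. For a rank-one sublattice spanned by `w`,
take two independent lattice vectors `x, y` of norm at most `λ₂`; then
`det L ≤ |[x y]| ≤ ‖x‖ ‖y‖ ≤ λ₂ ^ 2 = λ₁ ^ 2 ≤ ‖w‖ ^ 2`.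
-/

noncomputable section

/-- The planar lattice spanned over ℤ by `v1, v2` in Euclidean plane. -/
def lat (v1 v2 : EuclideanSpace ℝ (Fin 2)) : Set (EuclideanSpace ℝ (Fin 2)) :=
  {x | ∃ m n : ℤ, x = m • v1 + n • v2}

/-- The `i`-th successive minimum of a set `L` in the Euclidean plane. -/
noncomputable def succMin (L : Set (EuclideanSpace ℝ (Fin 2))) (i : ℕ) : ℝ :=
  sInf {μ : ℝ | 0 ≤ μ ∧ i ≤ Module.finrank ℝ (Submodule.span ℝ {x ∈ L | ‖x‖ ≤ μ})}

open Module

local notation "E2" => EuclideanSpace ℝ (Fin 2)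

theorem sqrt_det_gram_fin_one {E : Type*} [NormedAddCommGroup E] [InnerProductSpace ℝ E]
    (f : Fin 1 → E) : √(Matrix.gram ℝ f).det = ‖f 0‖ := by
  rw [Matrix.det_fin_one, Matrix.gram_apply, real_inner_self_eq_norm_sq,
    Real.sqrt_sq (norm_nonneg _)]

theorem exists_linearIndependent_pair_of_two_le_finrank_span {K V : Type*} [Field K]
    [AddCommGroup V] [Module K V] {s : Set V} (h : 2 ≤ finrank K (Submodule.span K s)) :
    ∃ x ∈ s, ∃ y ∈ s, LinearIndependent K ![x, y] := by
  by_contra! hdep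
  obtain ⟨x, hxs, hx0⟩ : ∃ x ∈ s, x ≠ 0 := by
    by_contra! hs
    rw [Submodule.span_eq_bot.2 hs, finrank_bot] at h
    omega
  have hsx : Submodule.span K s ≤ K ∙ x := by
    refine Submodule.span_le.2 fun y hys => ?_
    obtain ⟨a, rfl⟩ : ∃ a : K, a • x = y := by
      simpa [LinearIndependent.pair_iff' hx0] using hdep x hxs y hys
    exact Submodule.smul_mem _ a (Submodule.mem_span_singleton_self x)
  have hle := (Submodule.finrank_mono hsx).trans (finrank_span_singleton hx0).le
  omega

def planarDet (x y : E2) : ℝ := x 0 * y 1 - x 1 * y 0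

theorem planarDet_sq_add_inner_sq (x y : E2) :
    planarDet x y ^ 2 + inner ℝ x y ^ 2 = ‖x‖ ^ 2 * ‖y‖ ^ 2 := by
  simp only [EuclideanSpace.real_norm_sq_eq, PiLp.inner_apply, Fin.sum_univ_two, planarDet,
    RCLike.inner_apply, conj_trivial]
  ring

theorem det_gram_fin_two (f : Fin 2 → E2) :
    (Matrix.gram ℝ f).det = planarDet (f 0) (f 1) ^ 2 := by
  simp only [Matrix.det_fin_two, Matrix.gram_apply, real_inner_self_eq_norm_sq, real_inner_comm]
  linarith [planarDet_sq_add_inner_sq (f 0) (f 1)]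

theorem sqrt_det_gram_fin_two (f : Fin 2 → E2) :
    √(Matrix.gram ℝ f).det = |planarDet (f 0) (f 1)| := by
  rw [det_gram_fin_two, Real.sqrt_sq_eq_abs]

theorem planarDet_ne_zero_of_linearIndependent {x y : E2} (h : LinearIndependent ℝ ![x, y]) :
    planarDet x y ≠ 0 := by
  have hgram := (Matrix.det_gram_ne_zero_iff_linearIndependent (𝕜 := ℝ)).2 h
  rw [det_gram_fin_two] at hgram
  exact pow_ne_zero_iff two_ne_zero |>.1 hgram

theorem planarDet_zsmul_add_zsmul (v₁ v₂ : E2) (m n p q : ℤ) :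
    planarDet (m • v₁ + n • v₂) (p • v₁ + q • v₂) =
      ((m * q - n * p : ℤ) : ℝ) * planarDet v₁ v₂ := by
  simp only [planarDet, PiLp.add_apply, PiLp.smul_apply, zsmul_eq_mul]
  push_cast
  ring

theorem abs_planarDet_le_of_mem_lat {v₁ v₂ x y : E2} (hx : x ∈ lat v₁ v₂) (hy : y ∈ lat v₁ v₂)
    (hxy : planarDet x y ≠ 0) : |planarDet v₁ v₂| ≤ |planarDet x y| := by
  obtain ⟨m, n, rfl⟩ := hx
  obtain ⟨p, q, rfl⟩ := hy
  rw [planarDet_zsmul_add_zsmul] at hxy ⊢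
  have hc : m * q - n * p ≠ 0 := by
    intro hc
    simp [hc] at hxy
  rw [abs_mul, ← Int.cast_abs]
  exact le_mul_of_one_le_left (abs_nonneg _) (by exact_mod_cast Int.one_le_abs hc)

theorem abs_planarDet_le_norm_mul_norm (x y : E2) : |planarDet x y| ≤ ‖x‖ * ‖y‖ := by
  refine abs_le_of_sq_le_sq ?_ (by positivity)
  nlinarith [planarDet_sq_add_inner_sq x y, sq_nonneg (inner ℝ x y)]

theorem succMin_one_le_norm {L : Set E2} {x : E2} (hx : x ∈ L) (hx0 : x ≠ 0) :
    succMin L 1 ≤ ‖x‖ := by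
  refine csInf_le ⟨0, fun μ hμ => hμ.1⟩ ⟨norm_nonneg x, ?_⟩
  rw [← finrank_span_singleton (K := ℝ) hx0]
  exact Submodule.finrank_mono (Submodule.span_mono (by simpa using hx))

theorem sqrt_abs_planarDet_le_succMin_two {v₁ v₂ : E2} (hind : LinearIndependent ℝ ![v₁, v₂]) :
    √|planarDet v₁ v₂| ≤ succMin (lat v₁ v₂) 2 := by
  refine le_csInf ⟨max ‖v₁‖ ‖v₂‖, (norm_nonneg v₁).trans (le_max_left _ _), ?_⟩ ?_
  · have hsub : Set.range ![v₁, v₂] ⊆ {z ∈ lat v₁ v₂ | ‖z‖ ≤ max ‖v₁‖ ‖v₂‖} := by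
      rintro z ⟨i, rfl⟩
      fin_cases i
      · exact ⟨⟨1, 0, by simp⟩, le_max_left _ _⟩
      · exact ⟨⟨0, 1, by simp⟩, le_max_right _ _⟩
    calc 2 = finrank ℝ (Submodule.span ℝ (Set.range ![v₁, v₂])) := by
          simp [finrank_span_eq_card hind]
      _ ≤ _ := Submodule.finrank_mono (Submodule.span_mono hsub)
  · rintro μ ⟨hμ, h2⟩
    obtain ⟨x, ⟨hxL, hxμ⟩, y, ⟨hyL, hyμ⟩, hxy⟩ :=
      exists_linearIndependent_pair_of_two_le_finrank_span h2
    refine Real.sqrt_le_iff.2 ⟨hμ, ?_⟩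
    calc |planarDet v₁ v₂| ≤ |planarDet x y| :=
          abs_planarDet_le_of_mem_lat hxL hyL (planarDet_ne_zero_of_linearIndependent hxy)
      _ ≤ ‖x‖ * ‖y‖ := abs_planarDet_le_norm_mul_norm x y
      _ ≤ μ ^ 2 := by rw [sq]; exact mul_le_mul hxμ hyμ (norm_nonneg _) hμ

/-- Every well-rounded planar lattice is stable: for each rank-k sublattice
(given by a linearly independent family w of its vectors),
det(L)^{1/2} ≤ det(L')^{1/k}, where determinants are square roots of Gram
determinants. -/
theorem stmt_2 (v1 v2 : EuclideanSpace ℝ (Fin 2))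
    (hind : LinearIndependent ℝ ![v1, v2])
    (hWR : succMin (lat v1 v2) 1 = succMin (lat v1 v2) 2)
    (k : ℕ) (hk : 1 ≤ k) (w : Fin k → EuclideanSpace ℝ (Fin 2))
    (hw : ∀ i, w i ∈ lat v1 v2) (hwind : LinearIndependent ℝ w) :
    (Real.sqrt (Matrix.det (Matrix.of fun i j : Fin 2 =>
        (inner ℝ (![v1, v2] i) (![v1, v2] j) : ℝ)))) ^ ((1 : ℝ) / 2) ≤
      (Real.sqrt (Matrix.det (Matrix.of fun i j : Fin k =>
        (inner ℝ (w i) (w j) : ℝ)))) ^ ((1 : ℝ) / k) := by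
  have hk2 : k ≤ 2 := by simpa using hwind.fintype_card_le_finrank
  change √(Matrix.gram ℝ ![v1, v2]).det ^ _ ≤ √(Matrix.gram ℝ w).det ^ _
  rw [sqrt_det_gram_fin_two]
  interval_cases k
  · rw [sqrt_det_gram_fin_one, Nat.cast_one, div_one, Real.rpow_one, ← Real.sqrt_eq_rpow]
    calc √|planarDet v1 v2| ≤ succMin (lat v1 v2) 2 := sqrt_abs_planarDet_le_succMin_two hind
      _ = succMin (lat v1 v2) 1 := hWR.symm
      _ ≤ ‖w 0‖ := succMin_one_le_norm (hw 0) (hwind.ne_zero 0)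
  · rw [sqrt_det_gram_fin_two, Nat.cast_ofNat]
    have hw01 : LinearIndependent ℝ ![w 0, w 1] := by
      rwa [← FinVec.etaExpand_eq w] at hwind
    have hdet := abs_planarDet_le_of_mem_lat (hw 0) (hw 1)
      (planarDet_ne_zero_of_linearIndependent hw01)
    exact Real.rpow_le_rpow (abs_nonneg _) hdet (by norm_num)
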